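/- (Swartz's Dehn–Sommerville relations for balanced semi-Eulerian complexes, h-version.) Let Δ be a balanced simplicial complex of type a = (a_1, …, a_m) with flag h-numbers (h_b)_{b ≤ a}, let d = |a|, and suppose Δ is semi-Eulerian, i.e., m_F = 1 for every nonempty face F ∈ Δ. Then for every b ∈ ℕ^m with b ≤ a: h_{a−b} − h_b = (−1)^{|b|} · (χ̃(Δ) − (−1)^{d−1}) · ∏_{j=1}^m binomial(a_j, b_j). In particular, if moreover χ̃(Δ) = (−1)^{d−1} then h_{a−b} = h_b for all b ≤ a. -/

import Mathlib

open Finset MvPolynomial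

/-- A (finite, abstract) simplicial complex: a finite collection of finite subsets of `V`
containing the empty set and closed under taking subsets. -/
def IsSimplicialComplex {V : Type*} [DecidableEq V] (Δ : Finset (Finset V)) : Prop :=
  ∅ ∈ Δ ∧ ∀ F ∈ Δ, ∀ G ⊆ F, G ∈ Δ

/-- `Δ` has dimension `d - 1`: every face has at most `d` elements and some face has
exactly `d` elements. -/
def HasDimension {V : Type*} [DecidableEq V] (Δ : Finset (Finset V)) (d : ℕ) : Prop :=
  (∀ F ∈ Δ, F.card ≤ d) ∧ ∃ F ∈ Δ, F.card = d

/-- `fnum Δ i` is the number of faces of `Δ` with exactly `i` elements, i.e. `f_{i-1}`. -/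
def fnum {V : Type*} [DecidableEq V] (Δ : Finset (Finset V)) (i : ℕ) : ℕ :=
  (Δ.filter fun F => F.card = i).card

/-- The multiplicity `m_F = ∑_{G ∈ Δ, F ⊆ G} (−1)^{d−|G|}` of a face `F` of a complex of
dimension `d − 1` (all faces `G` satisfy `|G| ≤ d`, so `d - G.card` is the usual subtraction). -/
def mult {V : Type*} [DecidableEq V] (Δ : Finset (Finset V)) (d : ℕ) (F : Finset V) : ℤ :=
  ∑ G ∈ Δ.filter (fun G => F ⊆ G), (-1 : ℤ) ^ (d - G.card)

/-- The reduced Euler characteristic `χ̃(Γ) = ∑_{G ∈ Γ} (−1)^{|G|−1}`; the exponent is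
written `|G| + 1`, which has the same parity as `|G| − 1` (the empty face contributes `−1`). -/
def chiTilde {V : Type*} [DecidableEq V] (Γ : Finset (Finset V)) : ℤ :=
  ∑ G ∈ Γ, (-1 : ℤ) ^ (G.card + 1)

/-- The link of a face `F` in `Δ`. -/
def link {V : Type*} [DecidableEq V] (Δ : Finset (Finset V)) (F : Finset V) :
    Finset (Finset V) :=
  Δ.filter fun G => G ∩ F = ∅ ∧ G ∪ F ∈ Δ

/-- `Δ` (of dimension `d − 1`) is reciprocal if `m_F ∈ {0, 1}` for every nonempty face. -/
def IsReciprocal {V : Type*} [DecidableEq V] (Δ : Finset (Finset V)) (d : ℕ) : Prop :=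
  ∀ F ∈ Δ, F ≠ ∅ → mult Δ d F = 0 ∨ mult Δ d F = 1

/-- `Δ` (of dimension `d − 1`) is semi-Eulerian if `m_F = 1` for every nonempty face. -/
def IsSemiEulerian {V : Type*} [DecidableEq V] (Δ : Finset (Finset V)) (d : ℕ) : Prop :=
  ∀ F ∈ Δ, F ≠ ∅ → mult Δ d F = 1

/-- `fint Δ d i` is the number of interior faces (nonempty faces with `m_F = 1`) of `Δ`
with exactly `i` elements, i.e. `f^int_{i-1}`. -/
def fint {V : Type*} [DecidableEq V] (Δ : Finset (Finset V)) (d : ℕ) (i : ℕ) : ℕ :=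
  (Δ.filter fun F => F.card = i ∧ F ≠ ∅ ∧ mult Δ d F = 1).card

/-- `bvec κ F j` is the number of vertices of `F` with color `j`. -/
def bvec {V : Type*} [DecidableEq V] {m : ℕ} (κ : V → Fin m) (F : Finset V) (j : Fin m) : ℕ :=
  (F.filter fun v => κ v = j).card

/-- `Δ` is balanced of type `a` with respect to the coloring `κ`: every face of `Δ` that is
maximal under inclusion has exactly `a j` vertices of color `j`, for each color `j`. -/
def IsBalanced {V : Type*} [DecidableEq V] {m : ℕ} (Δ : Finset (Finset V))
    (κ : V → Fin m) (a : Fin m → ℕ) : Prop :=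
  ∀ F ∈ Δ, (∀ G ∈ Δ, F ⊆ G → G = F) → ∀ j, bvec κ F j = a j

/-!
Grouping the faces `F ⊆ G` by the larger face `G` in the definition of the multiplicities,
`∑_F m_F x^{b(F)} (1-x)^{a-b(F)} = ∑_G (-1)^{d-|G|} ∑_{F ⊆ G} x^{b(F)} (1-x)^{a-b(F)}
= ∑_G (-1)^{d-|G|} (1-x)^{a-b(G)}`, and the right side is the reversal `x^a H(1/x)` of the flag
`h`-polynomial `H = ∑_F x^{b(F)} (1-x)^{a-b(F)}`. For a semi-Eulerian complex the left side is
`H + (m_∅ - 1)(1-x)^a`, so comparing coefficients of `x^b` gives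
`h_{a-b} - h_b = (m_∅ - 1) (-1)^{|b|} ∏ binom(a_j, b_j)`. The same regrouping applied to
`∑_F (-1)^{|F|} m_F` gives `(-1)^d`, which is Klee's formula `m_∅ - 1 = χ̃(Δ) + (-1)^d`.
-/

section Complex

variable {V : Type*} [DecidableEq V] {Δ : Finset (Finset V)}

lemma IsSimplicialComplex.filter_subset_eq_powerset (hΔ : IsSimplicialComplex Δ)
    {G : Finset V} (hG : G ∈ Δ) : Δ.filter (· ⊆ G) = G.powerset := by
  ext F
  simp only [mem_filter, mem_powerset]
  exact ⟨And.right, fun h => ⟨hΔ.2 G hG F h, h⟩⟩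

lemma IsSimplicialComplex.sum_mult_smul {M : Type*} [AddCommGroup M]
    (hΔ : IsSimplicialComplex Δ) (d : ℕ) (f : Finset V → M) :
    ∑ F ∈ Δ, mult Δ d F • f F = ∑ G ∈ Δ, (-1 : ℤ) ^ (d - G.card) • ∑ F ∈ G.powerset, f F := by
  simp only [mult, sum_smul, smul_sum, sum_filter]
  rw [sum_comm]
  refine sum_congr rfl fun G hG => ?_
  rw [← hΔ.filter_subset_eq_powerset hG, sum_filter]
  exact sum_congr rfl fun F _ => by split_ifs <;> simp

lemma IsSemiEulerian.sum_mult_smul {M : Type*} [AddCommGroup M] {d : ℕ}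
    (hse : IsSemiEulerian Δ d) (hΔ : IsSimplicialComplex Δ) (f : Finset V → M) :
    ∑ F ∈ Δ, mult Δ d F • f F = (mult Δ d ∅ - 1) • f ∅ + ∑ F ∈ Δ, f F := by
  rw [← add_sum_erase _ _ hΔ.1, ← add_sum_erase _ _ hΔ.1, sub_smul, one_smul,
    sum_congr rfl fun F hF => by rw [hse F (mem_of_mem_erase hF) (ne_of_mem_erase hF), one_smul]]
  abel

/-- Klee's formula for the multiplicity of the empty face. -/
lemma IsSemiEulerian.mult_empty_sub_one {d : ℕ} (hse : IsSemiEulerian Δ d)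
    (hΔ : IsSimplicialComplex Δ) : mult Δ d ∅ - 1 = chiTilde Δ - (-1) ^ (d + 1) := by
  have hsum := hΔ.sum_mult_smul d fun F => (-1 : ℤ) ^ F.card
  rw [hse.sum_mult_smul hΔ] at hsum
  simp only [sum_powerset_neg_one_pow_card, smul_eq_mul, mul_ite, mul_one, mul_zero,
    sum_ite_eq', if_pos hΔ.1, card_empty, tsub_zero, pow_zero] at hsum
  have hchi : chiTilde Δ = -∑ F ∈ Δ, (-1 : ℤ) ^ F.card := by
    simp only [chiTilde, pow_succ, mul_neg_one, sum_neg_distrib]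
  rw [hchi, pow_succ]
  linarith

end Complex

section Coloring

variable {V : Type*} [DecidableEq V] {m : ℕ} (κ : V → Fin m)

lemma sum_bvec_eq_card (F : Finset V) : ∑ j, bvec κ F j = F.card :=
  (card_eq_sum_card_fiberwise fun v _ => mem_univ (κ v)).symm

@[simp]
lemma bvec_empty (j : Fin m) : bvec κ ∅ j = 0 := rfl

lemma bvec_mono {F G : Finset V} (h : F ⊆ G) (j : Fin m) : bvec κ F j ≤ bvec κ G j :=
  card_le_card (filter_subset_filter _ h)

lemma bvec_sdiff {F G : Finset V} (h : F ⊆ G) (j : Fin m) :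
    bvec κ (G \ F) j = bvec κ G j - bvec κ F j := by
  have hfilter : (G \ F).filter (κ · = j) = G.filter (κ · = j) \ F.filter (κ · = j) := by grind
  rw [bvec, hfilter, card_sdiff_of_subset (filter_subset_filter _ h), bvec, bvec]

lemma prod_pow_bvec {M : Type*} [CommMonoid M] (f : Fin m → M) (F : Finset V) :
    ∏ j, f j ^ bvec κ F j = ∏ v ∈ F, f (κ v) := by
  rw [← prod_fiberwise_of_maps_to (fun v _ => mem_univ (κ v))]
  refine prod_congr rfl fun j _ => ?_
  rw [prod_congr rfl fun v hv => congrArg f (mem_filter.1 hv).2, prod_const, bvec]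

variable {κ}

lemma IsBalanced.bvec_le {Δ : Finset (Finset V)} {a : Fin m → ℕ} (hbal : IsBalanced Δ κ a)
    {F : Finset V} (hF : F ∈ Δ) (j : Fin m) : bvec κ F j ≤ a j := by
  obtain ⟨G, hG, hmax⟩ :=
    exists_max_image (Δ.filter (F ⊆ ·)) card ⟨F, mem_filter.2 ⟨hF, subset_rfl⟩⟩
  obtain ⟨hGΔ, hFG⟩ := mem_filter.1 hG
  have hGmax : ∀ G' ∈ Δ, G ⊆ G' → G' = G := fun G' hG' hsub =>
    (eq_of_subset_of_card_le hsub (hmax G' (mem_filter.2 ⟨hG', hFG.trans hsub⟩))).symm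
  exact (bvec_mono κ hFG j).trans_eq (hbal G hGΔ hGmax j)

end Coloring

section Polynomial

open Finsupp (equivFunOnFinite)

variable {m : ℕ}

/-- `g` stands for the color vector `b(F)` of a face `F`. -/
noncomputable def flagHTerm (a g : Fin m → ℕ) : MvPolynomial (Fin m) ℤ :=
  (∏ j, X j ^ g j) * ∏ j, (1 - X j) ^ (a j - g j)

lemma sum_powerset_flagHTerm {V : Type*} [DecidableEq V] (κ : V → Fin m) (a : Fin m → ℕ)
    {G : Finset V} (hG : ∀ j, bvec κ G j ≤ a j) :
    ∑ F ∈ G.powerset, flagHTerm a (bvec κ F) = ∏ j, (1 - X j) ^ (a j - bvec κ G j) := by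
  have hterm : ∀ F ∈ G.powerset, flagHTerm a (bvec κ F)
      = (∏ j, (1 - X j) ^ (a j - bvec κ G j)) *
          ((∏ v ∈ F, X (κ v)) * ∏ v ∈ G \ F, (1 - X (κ v))) := by
    intro F hF
    have hFG : F ⊆ G := mem_powerset.1 hF
    have hsplit : ∏ j, (1 - X j : MvPolynomial (Fin m) ℤ) ^ (a j - bvec κ F j)
        = (∏ j, (1 - X j) ^ (a j - bvec κ G j)) * ∏ j, (1 - X j) ^ bvec κ (G \ F) j := by
      rw [← prod_mul_distrib]
      refine prod_congr rfl fun j _ => ?_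
      rw [← pow_add, bvec_sdiff κ hFG]
      have := bvec_mono κ hFG j
      have := hG j
      congr 1
      omega
    rw [flagHTerm, hsplit, prod_pow_bvec κ X, prod_pow_bvec κ (fun j => 1 - X j)]
    ring
  rw [sum_congr rfl hterm, ← mul_sum, ← prod_add]
  simp

lemma prod_X_pow_eq_monomial_equivFunOnFinite {R : Type*} [CommSemiring R] (e : Fin m → ℕ) :
    (∏ j, X j ^ e j : MvPolynomial (Fin m) R) = monomial (equivFunOnFinite.symm e) 1 := by
  rw [monomial_eq, C_1, one_mul, Finsupp.prod_fintype _ _ fun _ => pow_zero _]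
  rfl

lemma coeff_sum_Iic_C_mul_prod_X_pow {R : Type*} [CommSemiring R] (h : (Fin m → ℕ) → R)
    {a c : Fin m → ℕ} (hc : c ≤ a) :
    coeff (equivFunOnFinite.symm c) (∑ b ∈ Iic a, C (h b) * ∏ j, X j ^ b j) = h c := by
  simp only [coeff_sum, prod_X_pow_eq_monomial_equivFunOnFinite, coeff_C_mul, coeff_monomial,
    equivFunOnFinite.symm.injective.eq_iff, mul_ite, mul_one, mul_zero, sum_ite_eq',
    if_pos (mem_Iic.2 hc)]

lemma coeff_prod_one_sub_X_pow {R : Type*} [CommRing R] (f : Fin m → ℕ) (c : Fin m →₀ ℕ) :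
    coeff c (∏ j, (1 - X j : MvPolynomial (Fin m) R) ^ f j)
      = (-1) ^ (∑ j, c j) * ∏ j, ((f j).choose (c j) : R) := by
  have hexpand : ∀ j, (1 - X j : MvPolynomial (Fin m) R) ^ f j
      = ∑ k ∈ range (f j + 1), C ((-1) ^ k * ((f j).choose k : R)) * X j ^ k := by
    intro j
    rw [sub_eq_neg_add, add_pow]
    refine sum_congr rfl fun k _ => ?_
    rw [one_pow, mul_one, neg_pow, map_mul, map_pow, map_neg, map_one, map_natCast]
    ring
  simp only [hexpand, prod_univ_sum, prod_mul_distrib, ← map_prod,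
    prod_X_pow_eq_monomial_equivFunOnFinite, coeff_sum, coeff_C_mul, coeff_monomial,
    Equiv.symm_apply_eq, Finsupp.equivFunOnFinite_apply, mul_ite, mul_one, mul_zero, sum_ite_eq',
    prod_pow_eq_pow_sum]
  split_ifs with hc
  · rfl
  · obtain ⟨j, hj⟩ : ∃ j, f j < c j := by simpa [Fintype.mem_piFinset] using hc
    rw [prod_eq_zero (mem_univ j) (by rw [Nat.choose_eq_zero_of_lt hj, Nat.cast_zero]), mul_zero]

/-- The coefficientwise form of `x^a H(1/x) = ∑ (-1)^(d-|g|) (1-x)^(a-g)`: reversing the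
`flagHTerm` of `g` gives `(x-1)^(a-g)`. -/
lemma coeff_flagHTerm_tsub {a b g : Fin m → ℕ} (hb : b ≤ a) (hg : g ≤ a) :
    coeff (equivFunOnFinite.symm (a - b)) (flagHTerm a g)
      = (-1) ^ (∑ j, a j - ∑ j, g j)
          * coeff (equivFunOnFinite.symm b) (∏ j, (1 - X j) ^ (a j - g j)) := by
  rw [flagHTerm, prod_X_pow_eq_monomial_equivFunOnFinite, coeff_monomial_mul',
    coeff_prod_one_sub_X_pow, coeff_prod_one_sub_X_pow]
  simp only [Finsupp.coe_tsub, Finsupp.coe_equivFunOnFinite_symm, Pi.sub_apply, one_mul]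
  split_ifs with hgab
  · have hgab : ∀ j, g j + b j ≤ a j := fun j => by
      have hj : g j ≤ a j - b j := by simpa using hgab j
      have : b j ≤ a j := hb j
      omega
    have hchoose : ∀ j, (a j - g j).choose (a j - b j - g j) = (a j - g j).choose (b j) :=
      fun j => by rw [show a j - b j - g j = a j - g j - b j by omega, Nat.choose_symm (by grind)]
    have hsum : ∑ j, a j - ∑ j, g j = ∑ j, (a j - b j - g j) + ∑ j, b j := by
      have hsplit : ∑ j, a j = ∑ j, (a j - b j - g j) + ∑ j, b j + ∑ j, g j := by
        simp only [← sum_add_distrib]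
        exact sum_congr rfl fun j _ => by grind
      omega
    have hsq : ((-1 : ℤ) ^ ∑ j, b j) * (-1) ^ ∑ j, b j = 1 := by
      rw [← mul_pow, neg_one_mul, neg_neg, one_pow]
    simp only [hchoose, hsum, pow_add]
    linear_combination
      (-((-1 : ℤ) ^ (∑ j, (a j - b j - g j)) * ∏ j, ((a j - g j).choose (b j) : ℤ))) * hsq
  · obtain ⟨j, hj⟩ : ∃ j, a j - g j < b j := by
      simp only [Finsupp.le_def, Finsupp.coe_equivFunOnFinite_symm, Pi.sub_apply, not_forall]
        at hgab
      obtain ⟨j, hj⟩ := hgab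
      exact ⟨j, by have : g j ≤ a j := hg j; omega⟩
    rw [prod_eq_zero (mem_univ j) (by rw [Nat.choose_eq_zero_of_lt hj, Nat.cast_zero]),
      mul_zero, mul_zero]

end Polynomial

open Finsupp (equivFunOnFinite) in
theorem IsSemiEulerian.flagH_tsub_sub {V : Type*} [DecidableEq V] {Δ : Finset (Finset V)}
    {m : ℕ} {κ : V → Fin m} {a : Fin m → ℕ} {d : ℕ} (hse : IsSemiEulerian Δ d)
    (hΔ : IsSimplicialComplex Δ) (hle : ∀ F ∈ Δ, ∀ j, bvec κ F j ≤ a j) (hd : d = ∑ j, a j)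
    {h : (Fin m → ℕ) → ℤ}
    (hh : ∑ b ∈ Iic a, C (h b) * ∏ j, X j ^ b j = ∑ F ∈ Δ, flagHTerm a (bvec κ F))
    {b : Fin m → ℕ} (hb : b ≤ a) :
    h (a - b) - h b = (mult Δ d ∅ - 1) * ((-1) ^ (∑ j, b j) * ∏ j, ((a j).choose (b j) : ℤ)) := by
  set P : Finset V → MvPolynomial (Fin m) ℤ := fun G => ∏ j, (1 - X j) ^ (a j - bvec κ G j)
  have hreverse : (mult Δ d ∅ - 1) • P ∅ + ∑ F ∈ Δ, flagHTerm a (bvec κ F)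
      = ∑ G ∈ Δ, (-1 : ℤ) ^ (d - G.card) • P G := by
    have hmult := hse.sum_mult_smul hΔ fun F => flagHTerm a (bvec κ F)
    rw [hΔ.sum_mult_smul,
      sum_congr rfl fun G hG => by rw [sum_powerset_flagHTerm κ a (hle G hG)]] at hmult
    simpa [flagHTerm, P] using hmult.symm
  have hcoeff_b := congrArg (coeff (equivFunOnFinite.symm b)) hreverse
  simp only [coeff_add, coeff_smul, coeff_sum, ← hh, coeff_sum_Iic_C_mul_prod_X_pow h hb]
    at hcoeff_b
  have hcoeff_ab := congrArg (coeff (equivFunOnFinite.symm (a - b))) hh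
  simp only [coeff_sum, coeff_sum_Iic_C_mul_prod_X_pow h (tsub_le_self : a - b ≤ a)] at hcoeff_ab
  rw [sum_congr rfl fun G hG => coeff_flagHTerm_tsub hb fun j => hle G hG j] at hcoeff_ab
  simp only [← hd, sum_bvec_eq_card, P, coeff_prod_one_sub_X_pow, smul_eq_mul, bvec_empty,
    tsub_zero, Finsupp.coe_equivFunOnFinite_symm] at hcoeff_b hcoeff_ab
  linarith

theorem flag_DS_semiEulerian_general {V : Type*} [DecidableEq V] (Δ : Finset (Finset V)) {m : ℕ}
    (κ : V → Fin m) (a : Fin m → ℕ) (d : ℕ) (hd : d = ∑ j, a j)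
    (hΔ : IsSimplicialComplex Δ) (hbal : IsBalanced Δ κ a)
    (hse : IsSemiEulerian Δ d)
    (h : (Fin m → ℕ) → ℤ)
    (hh : (∑ b ∈ Finset.Iic a, C (h b) * ∏ j, X j ^ b j : MvPolynomial (Fin m) ℤ)
        = ∑ F ∈ Δ, (∏ j, X j ^ bvec κ F j) * ∏ j, (1 - X j) ^ (a j - bvec κ F j)) :
    (∀ b : Fin m → ℕ, b ≤ a →
      h (a - b) - h b
        = (-1 : ℤ) ^ (∑ j, b j) * (chiTilde Δ - (-1 : ℤ) ^ (d + 1))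
            * ∏ j, ((a j).choose (b j) : ℤ))
    ∧ (chiTilde Δ = (-1 : ℤ) ^ (d + 1) → ∀ b : Fin m → ℕ, b ≤ a → h (a - b) = h b) := by
  have hsub : ∀ b : Fin m → ℕ, b ≤ a → h (a - b) - h b
      = (-1 : ℤ) ^ (∑ j, b j) * (chiTilde Δ - (-1 : ℤ) ^ (d + 1)) * ∏ j, ((a j).choose (b j) : ℤ) :=
    fun b hb => by
      rw [hse.flagH_tsub_sub hΔ (fun F hF => hbal.bvec_le hF) hd hh hb, hse.mult_empty_sub_one hΔ]
      ring
  refine ⟨hsub, fun hχ b hb => sub_eq_zero.1 ?_⟩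
  rw [hsub b hb, hχ, sub_self, mul_zero, zero_mul]

/-- Swartz's Dehn–Sommerville relations for balanced semi-Eulerian complexes: for `b ≤ a`,
`h_{a−b} − h_b = (−1)^{|b|} (χ̃(Δ) − (−1)^{d−1}) ∏_j C(a_j, b_j)`; the exponent `d + 1`
has the same parity as `d − 1`. In particular if `χ̃(Δ) = (−1)^{d−1}` then `h_{a−b} = h_b`. -/
theorem flag_DS_semiEulerian {V : Type*} [DecidableEq V] (Δ : Finset (Finset V)) {m : ℕ}
    (hm : 1 ≤ m) (κ : V → Fin m) (a : Fin m → ℕ) (d : ℕ) (hd : d = ∑ j, a j) (hd1 : 1 ≤ d)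
    (hΔ : IsSimplicialComplex Δ) (hbal : IsBalanced Δ κ a)
    (hse : IsSemiEulerian Δ d)
    (h : (Fin m → ℕ) → ℤ)
    (hh : (∑ b ∈ Finset.Iic a, C (h b) * ∏ j, X j ^ b j : MvPolynomial (Fin m) ℤ)
        = ∑ F ∈ Δ, (∏ j, X j ^ bvec κ F j) * ∏ j, (1 - X j) ^ (a j - bvec κ F j)) :
    (∀ b : Fin m → ℕ, b ≤ a →
      h (a - b) - h b
        = (-1 : ℤ) ^ (∑ j, b j) * (chiTilde Δ - (-1 : ℤ) ^ (d + 1))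
            * ∏ j, ((a j).choose (b j) : ℤ))
    ∧ (chiTilde Δ = (-1 : ℤ) ^ (d + 1) → ∀ b : Fin m → ℕ, b ≤ a → h (a - b) = h b) :=
  flag_DS_semiEulerian_general Δ κ a d hd hΔ hbal hse h hh
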